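/- arXiv:1506.00785 — 4 statements merged into one kernel-verified Lean document; each statement's English description precedes it below -/
import Mathlib

section
/- Let W < V ∩ S be subspaces of F_q^n of dimensions w, v, s respectively, and suppose dim(S ∩ V) = ℓ. Then the number of N-dimensional subspaces U of S satisfying V ∩ U ⊆ W equals Σ_{r=0}^{w} q^{(ℓ−r)(N−r)} · [w choose r]_q · [s−ℓ choose N−r]_q, where [a choose b]_q denotes the Gaussian binomial coefficient. -/
open Finset

/-- The Gaussian binomial coefficient `[a choose b]_q`, counting `b`-dimensional
subspaces of an `a`-dimensional vector space over `F_q`; it is `0` if `a < b`. -/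
def gaussBinom (q a b : ℕ) : ℕ :=
  if b ≤ a then
    (∏ j ∈ Finset.range b, (q ^ a - q ^ j)) / (∏ j ∈ Finset.range b, (q ^ b - q ^ j))
  else 0

/-- Gaussian binomial with integer lower argument (zero for negative arguments). -/
def gaussBinomZ (q a : ℕ) (b : ℤ) : ℕ :=
  if 0 ≤ b then gaussBinom q a b.toNat else 0

open Module Submodule

set_option linter.unusedSectionVars false
set_option linter.unusedVariables false

section Aux

variable {F E : Type*} [Field F] [Fintype F] [AddCommGroup E] [Module F E] [FiniteDimensional F E]

lemma mem_iff_mkQ {M : Submodule F E} {x : E} : x ∈ M ↔ M.mkQ x = 0 := by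
  rw [← Submodule.ker_mkQ M, LinearMap.mem_ker, Submodule.ker_mkQ]

lemma card_li_mod (M : Submodule F E) (k : ℕ) :
    Nat.card {s : Fin k → E // LinearIndependent F (M.mkQ ∘ s)} =
      Fintype.card F ^ (finrank F M * k) *
        Nat.card {t : Fin k → E ⧸ M // LinearIndependent F t} := by
  have : Finite E := Module.finite_of_finite F
  obtain ⟨σ, hσ⟩ := M.mkQ.exists_rightInverse_of_surjective (range_mkQ M)
  have hσ' : ∀ y, M.mkQ (σ y) = y := fun y => congrArg (· y) (congrArg DFunLike.coe hσ)
  have e : {s : Fin k → E // LinearIndependent F (M.mkQ ∘ s)} ≃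
      (Fin k → M) × {t : Fin k → E ⧸ M // LinearIndependent F t} :=
  { toFun := fun s => (fun i => ⟨s.1 i - σ (M.mkQ (s.1 i)), by
        rw [mem_iff_mkQ, map_sub, hσ', sub_self]⟩, ⟨M.mkQ ∘ s.1, s.2⟩)
    invFun := fun p => ⟨fun i => (p.1 i : E) + σ (p.2.1 i), by
        have : M.mkQ ∘ (fun i => (p.1 i : E) + σ (p.2.1 i)) = p.2.1 := by
          funext i
          simp only [Function.comp_apply, map_add, hσ', mem_iff_mkQ.mp (p.1 i).2, zero_add]
        rw [this]; exact p.2.2⟩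
    left_inv := fun s => by
      apply Subtype.ext; funext i
      simp only [Function.comp_apply, map_sub, hσ', sub_add_cancel]
    right_inv := fun p => by
      refine Prod.ext (funext fun i => Subtype.ext ?_) (Subtype.ext (funext fun i => ?_)) <;>
        simp only [Function.comp_apply, map_add, hσ', mem_iff_mkQ.mp (p.1 i).2, zero_add,
          add_sub_cancel_right] }
  rw [Nat.card_congr e, Nat.card_prod, Nat.card_pi]
  have : Fintype (M : Type _) := Fintype.ofFinite _
  rw [Finset.prod_const, Nat.card_eq_fintype_card, card_eq_pow_finrank (K := F) (V := M),
    ← pow_mul, Finset.card_univ, Fintype.card_fin]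

noncomputable def span_fiber_equiv (M : Submodule F E) (k : ℕ) (U : Submodule F E)
    (hU : finrank F U = k) (hdisj : M ⊓ U = ⊥) :
    {s : {s : Fin k → E // LinearIndependent F (M.mkQ ∘ s)} //
        Submodule.span F (Set.range s.1) = U} ≃ {t : Fin k → U // LinearIndependent F t} where
  toFun s := ⟨fun i => ⟨s.1.1 i, s.2.le (Submodule.subset_span ⟨i, rfl⟩)⟩, by
    exact LinearIndependent.of_comp U.subtype (LinearIndependent.of_comp M.mkQ s.1.2)⟩
  invFun t := by
    have hli2 : LinearIndependent F (fun i => (t.1 i : E)) :=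
      t.2.map' U.subtype (Submodule.ker_subtype U)
    refine ⟨⟨fun i => (t.1 i : E), ?_⟩, ?_⟩
    · rw [Fintype.linearIndependent_iff]
      intro g hg
      have hx : (∑ i, g i • (t.1 i : E)) ∈ M := by
        rw [mem_iff_mkQ, map_sum]
        simpa using hg
      have hxU : (∑ i, g i • (t.1 i : E)) ∈ U :=
        Submodule.sum_mem _ (fun i _ => U.smul_mem _ (t.1 i).2)
      have h0 : (∑ i, g i • (t.1 i : E)) = 0 := by
        have h := Submodule.mem_inf.mpr ⟨hx, hxU⟩
        rw [hdisj, Submodule.mem_bot] at h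
        exact h
      have hsum : ∑ i, g i • t.1 i = 0 := by
        apply Subtype.coe_injective
        push_cast
        simpa using h0
      exact Fintype.linearIndependent_iff.mp t.2 g hsum
    · apply Submodule.eq_of_le_of_finrank_eq
      · rw [Submodule.span_le]
        rintro x ⟨i, rfl⟩
        exact (t.1 i).2
      · rw [finrank_span_eq_card hli2, Fintype.card_fin, hU]
  left_inv s := by apply Subtype.ext; apply Subtype.ext; rfl
  right_inv t := by apply Subtype.ext; rfl

lemma key_count (M : Submodule F E) (k : ℕ) (hk : k ≤ finrank F E - finrank F M) :
    Nat.card {U : Submodule F E // finrank F U = k ∧ M ⊓ U = ⊥} *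
        ∏ j ∈ Finset.range k, (Fintype.card F ^ k - Fintype.card F ^ j)
      = Fintype.card F ^ (finrank F M * k) *
        ∏ j ∈ Finset.range k, (Fintype.card F ^ (finrank F E - finrank F M) -
          Fintype.card F ^ j) := by
  have : Finite E := Module.finite_of_finite F
  have : Finite (E ⧸ M) := Finite.of_surjective _ (Submodule.mkQ_surjective M)
  have hquot : finrank F (E ⧸ M) = finrank F E - finrank F M := by
    have h1 := Submodule.finrank_quotient_add_finrank M
    have h2 : finrank F M ≤ finrank F E := Submodule.finrank_le M
    omega
  have hcardq : Nat.card {t : Fin k → E ⧸ M // LinearIndependent F t} =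
      ∏ j ∈ Finset.range k, (Fintype.card F ^ (finrank F E - finrank F M) - Fintype.card F ^ j) := by
    rw [card_linearIndependent (by omega), hquot, ← Fin.prod_univ_eq_prod_range]
  -- the span map
  set P : Submodule F E → Prop := fun U => finrank F U = k ∧ M ⊓ U = ⊥ with hP
  have hφ : ∀ s : {s : Fin k → E // LinearIndependent F (M.mkQ ∘ s)},
      P (Submodule.span F (Set.range s.1)) := by
    intro s
    have hli : LinearIndependent F s.1 := LinearIndependent.of_comp M.mkQ s.2
    constructor
    · rw [finrank_span_eq_card hli, Fintype.card_fin]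
    · rw [eq_bot_iff]
      intro x hx
      obtain ⟨hxM, hxS⟩ := Submodule.mem_inf.mp hx
      obtain ⟨c, rfl⟩ := (mem_span_range_iff_exists_fun F).mp hxS
      have h0 : ∀ i, c i = 0 := by
        apply Fintype.linearIndependent_iff.mp s.2
        have h := mem_iff_mkQ.mp hxM
        rw [map_sum] at h
        simpa using h
      simp [h0]
  let φ : {s : Fin k → E // LinearIndependent F (M.mkQ ∘ s)} → {U : Submodule F E // P U} :=
    fun s => ⟨Submodule.span F (Set.range s.1), hφ s⟩
  have e := Equiv.sigmaFiberEquiv φ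
  have hfib : ∀ U : {U : Submodule F E // P U},
      Nat.card {s // φ s = U} = ∏ j ∈ Finset.range k, (Fintype.card F ^ k - Fintype.card F ^ j) := by
    intro U
    have e2 : {s // φ s = U} ≃ {s : {s : Fin k → E // LinearIndependent F (M.mkQ ∘ s)} //
        Submodule.span F (Set.range s.1) = U.1} :=
      Equiv.subtypeEquivRight (fun s => by simp [φ, Subtype.ext_iff])
    rw [Nat.card_congr e2, Nat.card_congr (span_fiber_equiv M k U.1 U.2.1 U.2.2),
      card_linearIndependent (by rw [U.2.1]), U.2.1, ← Fin.prod_univ_eq_prod_range]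
  have hfin : Finite (Submodule F E) :=
    Finite.of_injective (fun U => (U : Set E)) SetLike.coe_injective
  have : Fintype {U : Submodule F E // P U} := Fintype.ofFinite _
  calc Nat.card {U : Submodule F E // P U} *
        ∏ j ∈ Finset.range k, (Fintype.card F ^ k - Fintype.card F ^ j)
      = ∑ U : {U : Submodule F E // P U}, Nat.card {s // φ s = U} := by
        rw [Finset.sum_congr rfl (fun U _ => hfib U), Finset.sum_const, Nat.card_eq_fintype_card,
          Finset.card_univ, smul_eq_mul]
    _ = Nat.card {s : Fin k → E // LinearIndependent F (M.mkQ ∘ s)} := by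
        have : Fintype {s : Fin k → E // LinearIndependent F (M.mkQ ∘ s)} := Fintype.ofFinite _
        have : ∀ U, Fintype {s // φ s = U} := fun U => Fintype.ofFinite _
        rw [Nat.card_congr e.symm, Nat.card_eq_fintype_card, Fintype.card_sigma]
        exact Finset.sum_congr rfl fun U _ => Nat.card_eq_fintype_card
    _ = _ := by rw [card_li_mod, hcardq]

omit [AddCommGroup E] [Module F E] [FiniteDimensional F E] in
lemma prodB_pos (k : ℕ) :
    0 < ∏ j ∈ Finset.range k, (Fintype.card F ^ k - Fintype.card F ^ j) :=
  Finset.prod_pos fun j hj => Nat.sub_pos_of_lt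
    (Nat.pow_lt_pow_right Fintype.one_lt_card (Finset.mem_range.mp hj))

lemma card_dim_eq (k : ℕ) :
    Nat.card {U : Submodule F E // finrank F U = k}
      = gaussBinom (Fintype.card F) (finrank F E) k := by
  by_cases hk : k ≤ finrank F E
  · have e : {U : Submodule F E // finrank F U = k ∧ (⊥ : Submodule F E) ⊓ U = ⊥} ≃
        {U : Submodule F E // finrank F U = k} :=
      Equiv.subtypeEquivRight (fun U => by simp)
    have hkey := key_count (F := F) (⊥ : Submodule F E) k (by simpa [finrank_bot])
    rw [finrank_bot, Nat.zero_mul, pow_zero, one_mul, Nat.sub_zero] at hkey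
    rw [gaussBinom, if_pos hk, Nat.card_congr e.symm]
    exact (Nat.div_eq_of_eq_mul_left (prodB_pos (F := F) k) hkey.symm).symm
  · have : IsEmpty {U : Submodule F E // finrank F U = k} := by
      constructor
      rintro ⟨U, hU⟩
      exact hk (hU ▸ Submodule.finrank_le U)
    rw [Nat.card_of_isEmpty, gaussBinom, if_neg hk]

lemma card_avoid (M : Submodule F E) (k : ℕ) :
    Nat.card {U : Submodule F E // finrank F U = k ∧ M ⊓ U = ⊥}
      = Fintype.card F ^ (finrank F M * k) *
        gaussBinom (Fintype.card F) (finrank F E - finrank F M) k := by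
  set d := finrank F E - finrank F M with hd
  by_cases hk : k ≤ d
  · have hkey := key_count M k hk
    have hmodeldim : finrank F (Fin d → F) = d := Module.finrank_fin_fun F
    have hmodel := key_count (F := F) (⊥ : Submodule F (Fin d → F)) k
      (by rw [finrank_bot, Nat.sub_zero, hmodeldim]; exact hk)
    rw [finrank_bot, Nat.zero_mul, pow_zero, one_mul, Nat.sub_zero, hmodeldim] at hmodel
    have e : {U : Submodule F (Fin d → F) // finrank F U = k ∧ (⊥ : Submodule F (Fin d → F)) ⊓ U = ⊥} ≃
        {U : Submodule F (Fin d → F) // finrank F U = k} :=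
      Equiv.subtypeEquivRight (fun U => by simp)
    rw [Nat.card_congr e, card_dim_eq, hmodeldim] at hmodel
    apply Nat.eq_of_mul_eq_mul_right (prodB_pos (F := F) k)
    rw [hkey, ← hmodel, mul_assoc]
  · have : IsEmpty {U : Submodule F E // finrank F U = k ∧ M ⊓ U = ⊥} := by
      constructor
      rintro ⟨U, hU, hdisj⟩
      have h1 := Submodule.finrank_sup_add_finrank_inf_eq M U
      have h2 : finrank F ↥(M ⊔ U) ≤ finrank F E := Submodule.finrank_le _
      have h3 : finrank F M ≤ finrank F E := Submodule.finrank_le M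
      rw [hdisj, finrank_bot, hU] at h1
      exact hk (by omega)
    rw [Nat.card_of_isEmpty, gaussBinom, if_neg hk, mul_zero]

lemma finrank_map_mkQ_add (R U : Submodule F E) (h : R ≤ U) :
    finrank F (U.map R.mkQ) + finrank F R = finrank F U := by
  have hh := LinearMap.finrank_range_add_finrank_ker (R.mkQ.comp U.subtype)
  rw [LinearMap.range_comp, Submodule.range_subtype, LinearMap.ker_comp, Submodule.ker_mkQ,
    (Submodule.comapSubtypeEquivOfLe h).finrank_eq] at hh
  exact hh

lemma card_fiber (M R : Submodule F E) (hRM : R ≤ M) (k : ℕ) :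
    Nat.card {U : Submodule F E // finrank F U = k ∧ M ⊓ U = R}
      = if finrank F R ≤ k then
          Fintype.card F ^ ((finrank F M - finrank F R) * (k - finrank F R)) *
            gaussBinom (Fintype.card F) (finrank F E - finrank F M) (k - finrank F R)
        else 0 := by
  set r := finrank F R with hr
  by_cases hrk : r ≤ k
  · rw [if_pos hrk]
    have hqdim : finrank F (E ⧸ R) + finrank F R = finrank F E :=
      Submodule.finrank_quotient_add_finrank R
    have hMbar : finrank F ((M.map R.mkQ : Submodule F (E ⧸ R))) + r = finrank F M :=
      finrank_map_mkQ_add R M hRM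
    have e : {U : Submodule F E // finrank F U = k ∧ M ⊓ U = R} ≃
        {Ub : Submodule F (E ⧸ R) // finrank F Ub = k - r ∧ (M.map R.mkQ) ⊓ Ub = ⊥} := by
      refine ⟨fun U => ⟨U.1.map R.mkQ, ?_, ?_⟩, fun Ub => ⟨Ub.1.comap R.mkQ, ?_, ?_⟩, ?_, ?_⟩
      · have hRU : R ≤ U.1 := U.2.2.symm.trans_le inf_le_right
        have := finrank_map_mkQ_add R U.1 hRU
        rw [U.2.1] at this
        omega
      · rw [eq_bot_iff]
        rintro x ⟨hxM, hxU⟩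
        obtain ⟨a, haM, rfl⟩ := hxM
        obtain ⟨b, hbU, hab⟩ := hxU
        have hRU : R ≤ U.1 := U.2.2.symm.trans_le inf_le_right
        have hdiff : a - b ∈ R := by
          rw [← Submodule.ker_mkQ R, LinearMap.mem_ker, map_sub, hab, sub_self]
        have haU : a ∈ U.1 := by
          have := U.1.add_mem (hRU hdiff) hbU
          simpa using this
        have haR : a ∈ R := U.2.2 ▸ Submodule.mem_inf.mpr ⟨haM, haU⟩
        simp [Submodule.mkQ_apply, (Submodule.Quotient.mk_eq_zero R).mpr haR]
      · have hmc : (Ub.1.comap R.mkQ).map R.mkQ = Ub.1 := by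
          rw [Submodule.map_comap_eq, Submodule.range_mkQ, top_inf_eq]
        have := finrank_map_mkQ_add R (Ub.1.comap R.mkQ) (Submodule.le_comap_mkQ R Ub.1)
        rw [hmc, Ub.2.1] at this
        omega
      · apply le_antisymm
        · rintro x ⟨hxM, hxU⟩
          have hx0 : R.mkQ x ∈ (M.map R.mkQ) ⊓ Ub.1 :=
            Submodule.mem_inf.mpr ⟨Submodule.mem_map_of_mem hxM, hxU⟩
          rw [Ub.2.2, Submodule.mem_bot] at hx0
          rwa [← Submodule.ker_mkQ R, LinearMap.mem_ker]
        · exact le_inf hRM (Submodule.le_comap_mkQ R Ub.1)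
      · intro U
        apply Subtype.ext
        have hRU : R ≤ U.1 := U.2.2.symm.trans_le inf_le_right
        simp only
        rw [Submodule.comap_map_mkQ, sup_eq_right.mpr hRU]
      · intro Ub
        apply Subtype.ext
        simp only
        rw [Submodule.map_comap_eq, Submodule.range_mkQ, top_inf_eq]
    rw [Nat.card_congr e, card_avoid]
    have h1 : finrank F ((M.map R.mkQ : Submodule F (E ⧸ R))) = finrank F M - r := by omega
    have h2 : finrank F (E ⧸ R) - (finrank F M - r)
        = finrank F E - finrank F M := by
      have hME : finrank F M ≤ finrank F E := Submodule.finrank_le M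
      have hRM' : r ≤ finrank F M := hr ▸ Submodule.finrank_mono hRM
      omega
    rw [h1, h2]
  · rw [if_neg hrk]
    have : IsEmpty {U : Submodule F E // finrank F U = k ∧ M ⊓ U = R} := by
      constructor
      rintro ⟨U, hU, hMU⟩
      have hRU : R ≤ U := hMU.symm.trans_le inf_le_right
      exact hrk (hU ▸ Submodule.finrank_mono hRU)
    rw [Nat.card_of_isEmpty]

noncomputable def subEquivDim (S : Submodule F E) (k : ℕ) :
    {U : Submodule F S // finrank F U = k} ≃ {U : Submodule F E // U ≤ S ∧ finrank F U = k} where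
  toFun U := ⟨U.1.map S.subtype, Submodule.map_subtype_le S U.1,
    by rw [Submodule.finrank_map_subtype_eq]; exact U.2⟩
  invFun V := ⟨V.1.comap S.subtype, by
    have hmc : (V.1.comap S.subtype).map S.subtype = V.1 := by
      rw [Submodule.map_comap_subtype, inf_eq_right.mpr V.2.1]
    rw [← Submodule.finrank_map_subtype_eq S, hmc]
    exact V.2.2⟩
  left_inv U := by
    apply Subtype.ext
    simp only
    rw [Submodule.comap_map_eq, Submodule.ker_subtype, sup_bot_eq]
  right_inv V := by
    apply Subtype.ext
    simp only
    rw [Submodule.map_comap_subtype, inf_eq_right.mpr V.2.1]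

lemma master (Mo Wo : Submodule F E) (hWM : Wo ≤ Mo) (N : ℕ) :
    Nat.card {U : Submodule F E // finrank F U = N ∧ Mo ⊓ U ≤ Wo}
      = ∑ r ∈ Finset.range (finrank F Wo + 1),
          Fintype.card F ^ ((finrank F Mo - r) * (N - r)) *
            gaussBinom (Fintype.card F) (finrank F Wo) r *
            gaussBinomZ (Fintype.card F) (finrank F E - finrank F Mo) ((N : ℤ) - (r : ℤ)) := by
  classical
  have : Finite E := Module.finite_of_finite F
  have hfin : Finite (Submodule F E) :=
    Finite.of_injective (fun U => (U : Set E)) SetLike.coe_injective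
  have : Fintype {R : Submodule F E // R ≤ Wo} := Fintype.ofFinite _
  set f : ℕ → ℕ := fun r =>
    if r ≤ N then
      Fintype.card F ^ ((finrank F Mo - r) * (N - r)) *
        gaussBinom (Fintype.card F) (finrank F E - finrank F Mo) (N - r)
    else 0 with hf
  let φ : {U : Submodule F E // finrank F U = N ∧ Mo ⊓ U ≤ Wo} →
      {R : Submodule F E // R ≤ Wo} := fun U => ⟨Mo ⊓ U.1, U.2.2⟩
  have hfib : ∀ R : {R : Submodule F E // R ≤ Wo},
      Nat.card {U // φ U = R} = f (finrank F R.1) := by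
    intro R
    have e3 : {U // φ U = R} ≃ {U : Submodule F E // finrank F U = N ∧ Mo ⊓ U = R.1} :=
      { toFun := fun u => ⟨u.1.1, u.1.2.1, congrArg Subtype.val u.2⟩
        invFun := fun u => ⟨⟨u.1, u.2.1, le_of_eq_of_le u.2.2 R.2⟩, Subtype.ext u.2.2⟩
        left_inv := fun u => by apply Subtype.ext; apply Subtype.ext; rfl
        right_inv := fun u => by apply Subtype.ext; rfl }
    rw [Nat.card_congr e3, card_fiber Mo R.1 (le_trans R.2 hWM) N, hf]
  -- total = sum over fibers
  have htot : Nat.card {U : Submodule F E // finrank F U = N ∧ Mo ⊓ U ≤ Wo}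
      = ∑ R : {R : Submodule F E // R ≤ Wo}, f (finrank F R.1) := by
    have : Fintype {U : Submodule F E // finrank F U = N ∧ Mo ⊓ U ≤ Wo} := Fintype.ofFinite _
    have : ∀ R, Fintype {U // φ U = R} := fun R => Fintype.ofFinite _
    rw [Nat.card_congr (Equiv.sigmaFiberEquiv φ).symm, Nat.card_eq_fintype_card,
      Fintype.card_sigma]
    exact Finset.sum_congr rfl fun R _ => (Nat.card_eq_fintype_card).symm.trans (hfib R)
  rw [htot]
  -- group by dimension
  have hmaps : ∀ R : {R : Submodule F E // R ≤ Wo}, R ∈ Finset.univ →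
      finrank F R.1 ∈ Finset.range (finrank F Wo + 1) := by
    intro R _
    rw [Finset.mem_range]
    exact Nat.lt_succ_of_le (Submodule.finrank_mono R.2)
  rw [← Finset.sum_fiberwise_of_maps_to hmaps (fun R => f (finrank F R.1))]
  refine Finset.sum_congr rfl fun r hr => ?_
  have hcardr : (Finset.univ.filter (fun R : {R : Submodule F E // R ≤ Wo} =>
      finrank F R.1 = r)).card = gaussBinom (Fintype.card F) (finrank F Wo) r := by
    rw [← Fintype.card_subtype]
    have e4 : {R : {R : Submodule F E // R ≤ Wo} // finrank F R.1 = r} ≃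
        {R : Submodule F E // R ≤ Wo ∧ finrank F R = r} :=
      Equiv.subtypeSubtypeEquivSubtypeInter (fun R : Submodule F E => R ≤ Wo) (fun R => finrank F R = r)
    rw [← Nat.card_eq_fintype_card, Nat.card_congr (e4.trans (subEquivDim Wo r).symm),
      card_dim_eq]
  calc ∑ R ∈ Finset.univ.filter (fun R : {R : Submodule F E // R ≤ Wo} =>
          finrank F R.1 = r), f (finrank F R.1)
      = ∑ _R ∈ Finset.univ.filter (fun R : {R : Submodule F E // R ≤ Wo} =>
          finrank F R.1 = r), f r := by
        refine Finset.sum_congr rfl fun R hR => ?_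
        rw [(Finset.mem_filter.mp hR).2]
    _ = gaussBinom (Fintype.card F) (finrank F Wo) r * f r := by
        rw [Finset.sum_const, hcardr, smul_eq_mul]
    _ = _ := by
        simp only [hf]
        by_cases hrN : r ≤ N
        · rw [if_pos hrN, gaussBinomZ, if_pos (by omega : (0:ℤ) ≤ (N:ℤ) - (r:ℤ))]
          have : ((N : ℤ) - (r : ℤ)).toNat = N - r := by omega
          rw [this]
          ring
        · rw [if_neg hrN, gaussBinomZ, if_neg (by omega : ¬ (0:ℤ) ≤ (N:ℤ) - (r:ℤ)), mul_zero,
            mul_zero]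


end Aux

/-- if `W ≤ V ⊓ S` with `dim W = w`, `dim V = v`, `dim S = s`,
`dim (V ⊓ S) = ℓ`, then the number of `N`-dimensional subspaces `U ≤ S` with
`V ⊓ U ≤ W` is `∑_{r=0}^{w} q^{(ℓ-r)(N-r)} [w r]_q [s-ℓ, N-r]_q`. -/
theorem count_subspaces_meeting_V_inside_W
    (F : Type*) [Field F] [Fintype F]
    (n w v s ℓ N : ℕ)
    (W V S : Submodule F (Fin n → F)) (hW : W ≤ V ⊓ S)
    (hw : Module.finrank F W = w) (hv : Module.finrank F V = v)
    (hs : Module.finrank F S = s) (hℓ : Module.finrank F ↥(V ⊓ S) = ℓ) :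
    Nat.card {U : Submodule F (Fin n → F) // U ≤ S ∧ Module.finrank F U = N ∧ V ⊓ U ≤ W}
      = ∑ r ∈ Finset.range (w + 1),
          Fintype.card F ^ ((ℓ - r) * (N - r)) * gaussBinom (Fintype.card F) w r
            * gaussBinomZ (Fintype.card F) (s - ℓ) ((N : ℤ) - (r : ℤ)) := by
  classical
  set Mo : Submodule F ↥S := (V ⊓ S).comap S.subtype with hMoDef
  set Wo : Submodule F ↥S := W.comap S.subtype with hWoDef
  have hWS : W ≤ S := le_trans hW inf_le_right
  have hmapWo : Wo.map S.subtype = W := by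
    rw [hWoDef, Submodule.map_comap_subtype, inf_eq_right.mpr hWS]
  have hmapMo : Mo.map S.subtype = V ⊓ S := by
    rw [hMoDef, Submodule.map_comap_subtype, inf_eq_right.mpr (inf_le_right : V ⊓ S ≤ S)]
  have hWo : finrank F Wo = w := by
    rw [← hw, ← hmapWo, Submodule.finrank_map_subtype_eq]
  have hMo : finrank F Mo = ℓ := by
    rw [← hℓ, ← hmapMo, Submodule.finrank_map_subtype_eq]
  have e : {U : Submodule F (Fin n → F) // U ≤ S ∧ finrank F U = N ∧ V ⊓ U ≤ W} ≃
      {U' : Submodule F ↥S // finrank F U' = N ∧ Mo ⊓ U' ≤ Wo} := by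
    refine ⟨fun U => ⟨U.1.comap S.subtype, ?_, ?_⟩, fun U' => ⟨U'.1.map S.subtype,
      Submodule.map_subtype_le S U'.1, ?_, ?_⟩, ?_, ?_⟩
    · have hmc : (U.1.comap S.subtype).map S.subtype = U.1 := by
        rw [Submodule.map_comap_subtype, inf_eq_right.mpr U.2.1]
      rw [← Submodule.finrank_map_subtype_eq S, hmc]
      exact U.2.2.1
    · rintro x hx
      obtain ⟨hx1, hx2⟩ := Submodule.mem_inf.mp hx
      rw [hMoDef, Submodule.mem_comap] at hx1
      rw [Submodule.mem_comap] at hx2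
      rw [hWoDef, Submodule.mem_comap]
      exact U.2.2.2 (Submodule.mem_inf.mpr ⟨(Submodule.mem_inf.mp hx1).1, hx2⟩)
    · rw [Submodule.finrank_map_subtype_eq]
      exact U'.2.1
    · rintro y hy
      obtain ⟨hyV, hyU⟩ := Submodule.mem_inf.mp hy
      obtain ⟨x, hxU', rfl⟩ := hyU
      have hxMo : x ∈ Mo := by
        rw [hMoDef, Submodule.mem_comap]
        exact Submodule.mem_inf.mpr ⟨hyV, x.2⟩
      have hxWo : x ∈ Wo := U'.2.2 (Submodule.mem_inf.mpr ⟨hxMo, hxU'⟩)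
      rwa [hWoDef, Submodule.mem_comap] at hxWo
    · intro U
      apply Subtype.ext
      simp only
      rw [Submodule.map_comap_subtype, inf_eq_right.mpr U.2.1]
    · intro U'
      apply Subtype.ext
      simp only
      rw [Submodule.comap_map_eq, Submodule.ker_subtype, sup_bot_eq]
  rw [Nat.card_congr e, master Mo Wo (Submodule.comap_mono hW) N, hWo, hMo, hs]
end

section
/- Let m, n, d_S, N be positive integers with N ≤ d_S, let V^{(S)} ∈ F_q^{d_S×n} have rank d_S, for each i ∈ [m] let X^{(i)} ≤ F_q^n be a subspace, and let R ∈ F_q^{m×n} have each row R_i in the row space of V^{(S)}. Define κ = min{ rank(A + R) : A ∈ F_q^{m×n}, A_i ∈ X^{(i)} ∩ ⟨V^{(S)}⟩ for all i }. Then there exists L ∈ F_q^{κ×d_S} such that for each i, R_i ∈ ⟨L·V^{(S)}⟩ + X^{(i)}, and no L ∈ F_q^{N×d_S} with N < κ has this property. -/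
open Matrix

/-- The row space of a matrix: the span of its rows. -/
def rowSpace {F : Type*} [Field F] {a n : ℕ} (M : Matrix (Fin a) (Fin n) F) :
    Submodule F (Fin n → F) :=
  Submodule.span F (Set.range fun i => M i)

lemma row_mem_rowSpace {F : Type*} [Field F] {a n : ℕ} (M : Matrix (Fin a) (Fin n) F)
    (i : Fin a) : M i ∈ rowSpace M :=
  Submodule.subset_span ⟨i, rfl⟩

lemma rowSpace_le {F : Type*} [Field F] {a n : ℕ} {M : Matrix (Fin a) (Fin n) F}
    {P : Submodule F (Fin n → F)} (h : ∀ i, M i ∈ P) : rowSpace M ≤ P := by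
  rw [rowSpace, Submodule.span_le]
  rintro _ ⟨i, rfl⟩; exact h i

lemma rank_eq_finrank_rowSpace {F : Type*} [Field F] {a n : ℕ}
    (M : Matrix (Fin a) (Fin n) F) :
    M.rank = Module.finrank F (rowSpace M) := by
  rw [Matrix.rank_eq_finrank_span_row]; rfl

lemma mul_row_mem_rowSpace {F : Type*} [Field F] {a b n : ℕ}
    (L : Matrix (Fin a) (Fin b) F) (VS : Matrix (Fin b) (Fin n) F) (i : Fin a) :
    (L * VS) i ∈ rowSpace VS := by
  have : (L * VS) i = ∑ k, L i k • VS k := by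
    ext j
    simp [Matrix.mul_apply, Finset.sum_apply]
  rw [this]
  exact Submodule.sum_mem _ fun k _ => Submodule.smul_mem _ _ (row_mem_rowSpace VS k)

/-- the optimal length of an `F_q`-linear index code with coded side
information equals the min-rank `κ = min { rank (A + R) : Aᵢ ∈ X⁽ⁱ⁾ ⊓ ⟨V⁽ˢ⁾⟩ }`:
there is an `L ∈ F_q^{κ×d_S}` with `Rᵢ ∈ ⟨L·V⁽ˢ⁾⟩ + X⁽ⁱ⁾` for all `i`, and no such
`L` with fewer than `κ` rows exists. -/
theorem optimal_linear_index_code_length_eq_minrank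
    (F : Type*) [Field F] [Fintype F] [DecidableEq F]
    (m n d_S N κ : ℕ) (hm : 0 < m) (hn : 0 < n) (hdS : 0 < d_S) (hN : 0 < N)
    (hNdS : N ≤ d_S)
    (VS : Matrix (Fin d_S) (Fin n) F) (hVS : VS.rank = d_S)
    (Xi : Fin m → Submodule F (Fin n → F))
    (R : Matrix (Fin m) (Fin n) F)
    (hR : ∀ i, R i ∈ rowSpace VS)
    (hκ : κ = sInf {k : ℕ | ∃ A : Matrix (Fin m) (Fin n) F,
        (∀ i, A i ∈ Xi i ⊓ rowSpace VS) ∧ (A + R).rank = k}) :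
    (∃ L : Matrix (Fin κ) (Fin d_S) F,
        ∀ i, R i ∈ rowSpace (L * VS) ⊔ Xi i) ∧
      ∀ (N' : ℕ), N' < κ → ∀ L : Matrix (Fin N') (Fin d_S) F,
        ¬ (∀ i, R i ∈ rowSpace (L * VS) ⊔ Xi i) := by
  set S : Set ℕ := {k : ℕ | ∃ A : Matrix (Fin m) (Fin n) F,
      (∀ i, A i ∈ Xi i ⊓ rowSpace VS) ∧ (A + R).rank = k} with hS
  have hne : S.Nonempty := ⟨R.rank, 0, fun i => Submodule.zero_mem _, by rw [zero_add]⟩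
  have hmem : κ ∈ S := hκ ▸ Nat.sInf_mem hne
  obtain ⟨A, hA, hrank⟩ := hmem
  constructor
  · -- existence of L with κ rows
    set M := A + R with hM
    have hMrows : ∀ i, M i ∈ rowSpace VS := fun i => by
      have : M i = A i + R i := rfl
      rw [this]
      exact Submodule.add_mem _ (hA i).2 (hR i)
    have hfin : Module.finrank F (rowSpace M) = κ := by
      rw [← rank_eq_finrank_rowSpace, hrank]
    have : Module.Finite F (rowSpace M) := by
      exact FiniteDimensional.finiteDimensional_submodule _
    let b := Module.finBasisOfFinrankEq F (rowSpace M) hfin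
    -- each basis vector is in rowSpace VS, so it's c ᵥ* VS for some c
    have hbmem : ∀ j : Fin κ, ((b j : Fin n → F)) ∈ rowSpace VS :=
      fun j => rowSpace_le hMrows (b j).2
    have hc : ∀ j : Fin κ, ∃ c : Fin d_S → F, ∑ k, c k • VS k = (b j : Fin n → F) := by
      intro j
      have h := hbmem j
      rw [rowSpace] at h
      exact (Submodule.mem_span_range_iff_exists_fun F).mp h
    choose c hcc using hc
    refine ⟨Matrix.of c, fun i => ?_⟩
    have hrowLVS : ∀ j, (Matrix.of c * VS) j = (b j : Fin n → F) := by
      intro j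
      ext x
      rw [← hcc j]
      simp [Matrix.mul_apply, Finset.sum_apply]
    have hMle : rowSpace M ≤ rowSpace (Matrix.of c * VS) := by
      have hspan : rowSpace (Matrix.of c * VS)
          = Submodule.span F (Set.range fun j => (b j : Fin n → F)) := by
        rw [rowSpace]
        congr 1
        ext v
        constructor
        · rintro ⟨j, rfl⟩; exact ⟨j, (hrowLVS j).symm⟩
        · rintro ⟨j, rfl⟩; exact ⟨j, hrowLVS j⟩
      rw [hspan]
      have h2 : Submodule.map (rowSpace M).subtype
          (Submodule.span F (Set.range b)) = rowSpace M := by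
        rw [b.span_eq, Submodule.map_top, Submodule.range_subtype]
      rw [Submodule.map_span, ← Set.range_comp] at h2
      exact le_of_eq h2.symm
    have hRi : R i = M i + (-(A i)) := by
      funext j
      simp only [hM, Matrix.add_apply, Pi.add_apply, Pi.neg_apply]
      ring
    rw [hRi]
    exact Submodule.add_mem_sup (hMle (row_mem_rowSpace M i))
      (Submodule.neg_mem _ (hA i).1)
  · -- no smaller L works
    intro N' hN' L hL
    have hx : ∀ i, ∃ y ∈ rowSpace (L * VS), ∃ x ∈ Xi i, y + x = R i := by
      intro i
      exact Submodule.mem_sup.mp (hL i)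
    choose y hy x hx hyx using hx
    set A' : Matrix (Fin m) (Fin n) F := Matrix.of fun i => -(x i) with hA'
    have hA'mem : ∀ i, A' i ∈ Xi i ⊓ rowSpace VS := by
      intro i
      constructor
      · exact Submodule.neg_mem _ (hx i)
      · have hAi : A' i = y i - R i := by
          funext j
          have h := congrFun (hyx i) j
          simp only [Pi.add_apply] at h
          simp only [hA', Matrix.of_apply, Pi.sub_apply, Pi.neg_apply]
          linear_combination -h
        rw [hAi]
        exact Submodule.sub_mem _ (rowSpace_le (fun j => mul_row_mem_rowSpace L VS j) (hy i)) (hR i)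
    have hrows : ∀ i, (A' + R) i ∈ rowSpace (L * VS) := by
      intro i
      have hAR : (A' + R) i = y i := by
        funext j
        simp only [Matrix.add_apply, hA', Matrix.of_apply, Pi.add_apply, Pi.neg_apply]
        have h := congrFun (hyx i) j
        simp only [Pi.add_apply] at h
        linear_combination -h
      rw [hAR]; exact hy i
    have hle : (A' + R).rank ≤ N' := by
      rw [rank_eq_finrank_rowSpace]
      calc Module.finrank F (rowSpace (A' + R))
          ≤ Module.finrank F (rowSpace (L * VS)) :=
            Submodule.finrank_mono (rowSpace_le hrows)
        _ ≤ N' := by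
            rw [rowSpace]
            simpa [Set.finrank] using
              finrank_range_le_card (R := F) (fun j : Fin N' => (L * VS) j)
    have : κ ≤ (A' + R).rank := hκ ▸ Nat.sInf_le ⟨A', hA'mem, rfl⟩
    omega
end

section
/- (Singleton bound for ECIC) Let L ∈ F_q^{N×d_S} be such that for every i ∈ [m] and every Z ∈ F_q^n with V^{(i)}Z = 0 and R_iZ ≠ 0, the vector L V^{(S)} Z has Hamming weight at least 2δ+1. Let L' be obtained from L by deleting any 2δ rows. Then for every i and every such Z, L' V^{(S)} Z ≠ 0; consequently N − 2δ ≥ κ(I), i.e., N(I,δ) ≥ κ(I) + 2δ. -/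
open Matrix

lemma key_lemma
    (F : Type*) [Field F] [Fintype F] [DecidableEq F]
    (n d_S N δ : ℕ) (hδN : 2 * δ ≤ N)
    (VS : Matrix (Fin d_S) (Fin n) F)
    (L : Matrix (Fin N) (Fin d_S) F)
    (z : Fin n → F)
    (hw : 2 * δ + 1 ≤ hammingNorm ((L * VS) *ᵥ z))
    (f : Fin (N - 2 * δ) → Fin N) (hf : Function.Injective f) :
    (L.submatrix f id * VS) *ᵥ z ≠ 0 := by
  intro h0
  set w : Fin N → F := (L * VS) *ᵥ z with hwdef
  have hzero : ∀ k, w (f k) = 0 := by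
    intro k
    have := congrFun h0 k
    simpa [hwdef, Matrix.mulVec, Matrix.mul_apply, dotProduct, Finset.mul_sum,
      Finset.sum_mul, mul_assoc, Finset.sum_comm (γ := Fin d_S)] using this
  have hsub : ({i | w i ≠ 0} : Finset (Fin N)) ⊆ Finset.univ \ Finset.image f Finset.univ := by
    intro i hi
    simp only [Finset.mem_filter, Finset.mem_univ, true_and] at hi
    simp only [Finset.mem_sdiff, Finset.mem_univ, true_and, Finset.mem_image, not_exists]
    rintro k ⟨-, rfl⟩
    exact hi (hzero k)
  have hcard : hammingNorm w ≤ 2 * δ := by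
    calc hammingNorm w ≤ (Finset.univ \ Finset.image f Finset.univ).card :=
          Finset.card_le_card hsub
      _ = N - (N - 2 * δ) := by
          rw [Finset.card_sdiff_of_subset (Finset.subset_univ _), Finset.card_image_of_injective _ hf]
          simp
      _ = 2 * δ := by omega
  omega

/-- Singleton bound for ECIC: if `L` represents a Hamming-metric
`δ`-error-correcting index code (every confusable direction `z` has
`wt(L V⁽ˢ⁾ z) ≥ 2δ+1`), then deleting any `2δ` rows of `L` still yields an index
code (`L' V⁽ˢ⁾ z ≠ 0`); consequently `N − 2δ ≥ κ(I)`, where `κ(I)` is the minimal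
number of rows of a matrix representing an (error-free) linear index code. -/
theorem singleton_bound_ECIC
    (F : Type*) [Field F] [Fintype F] [DecidableEq F]
    (m n d_S N δ : ℕ) (hδN : 2 * δ ≤ N)
    (d : Fin m → ℕ)
    (V : ∀ i : Fin m, Matrix (Fin (d i)) (Fin n) F)
    (R : Fin m → Fin n → F)
    (VS : Matrix (Fin d_S) (Fin n) F)
    (L : Matrix (Fin N) (Fin d_S) F)
    (hL : ∀ (i : Fin m) (z : Fin n → F), V i *ᵥ z = 0 → R i ⬝ᵥ z ≠ 0 →
        2 * δ + 1 ≤ hammingNorm ((L * VS) *ᵥ z)) :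
    (∀ f : Fin (N - 2 * δ) → Fin N, Function.Injective f →
        ∀ (i : Fin m) (z : Fin n → F), V i *ᵥ z = 0 → R i ⬝ᵥ z ≠ 0 →
          (L.submatrix f id * VS) *ᵥ z ≠ 0) ∧
      sInf {k : ℕ | ∃ L0 : Matrix (Fin k) (Fin d_S) F,
          ∀ (i : Fin m) (z : Fin n → F), V i *ᵥ z = 0 → R i ⬝ᵥ z ≠ 0 →
            (L0 * VS) *ᵥ z ≠ 0} ≤ N - 2 * δ := by
  have hmain : ∀ f : Fin (N - 2 * δ) → Fin N, Function.Injective f →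
      ∀ (i : Fin m) (z : Fin n → F), V i *ᵥ z = 0 → R i ⬝ᵥ z ≠ 0 →
        (L.submatrix f id * VS) *ᵥ z ≠ 0 := by
    intro f hf i z hV hR
    exact key_lemma F n d_S N δ hδN VS L z (hL i z hV hR) f hf
  refine ⟨hmain, Nat.sInf_le ?_⟩
  refine ⟨L.submatrix (Fin.castLE (by omega)) id, fun i z hV hR =>
    hmain _ (Fin.castLE_injective _) i z hV hR⟩
end

section
/- (Syndrome decoding correctness) Let L' ∈ F_q^{N×n}, and suppose every z ∈ F_q^n with z_j = 0 for j ∈ [d_i] and z_{d_i+1} ≠ 0 satisfies wt(L' z) ≥ 2δ+1. Let C^{(i)} ≤ F_q^N be the span of the columns of L' indexed by {d_i+1,...,n}, and C_{(i)} ≤ C^{(i)} the span of columns indexed by {d_i+2,...,n}. Let H ∈ F_q^{r×N} be a parity-check matrix of C_{(i)} whose last r−1 rows H^{(i)} form a parity-check matrix of C^{(i)}, with first row h satisfying h · L'^{d_i+1} = s ≠ 0 (where L'^{d_i+1} is the (d_i+1)-th column). Given X' ∈ F_q^{n×t}, an error W ∈ F_q^{N×t} with wt(W) ≤ δ, and any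 ε ∈ F_q^{N×t} with wt(ε) ≤ δ and H^{(i)} ε = H^{(i)} W, one has (α − hε)/s = X'_{d_i+1}, where α is the first row of H·(L'X' + W − Σ_{j∈[d_i]} L'^{j} X'_j). -/
/-!
Work one column `k` at a time. Removing the known rows `X'_j`, `j < dᵢ`, leaves the received word
`L' z + w`, where `z` vanishes below `dᵢ` and `z_{dᵢ} = X'_{dᵢ,k}`. The syndrome condition puts
`w − ε` in `C⁽ⁱ⁾`, and since its weight is at most `2δ` the weight hypothesis forbids it from
involving column `dᵢ`; hence it lies in `C₍ᵢ₎` and `h` annihilates it. What is left is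
`h · L' z = s · z_{dᵢ}`.
-/

open Matrix Finset

section ColSpan

variable {R : Type*} [CommSemiring R] {N n : ℕ}

/-- Columns are indexed from `0`, so the paper's `C⁽ⁱ⁾` is `colSpanFrom L' dᵢ` and its `C₍ᵢ₎` is
`colSpanFrom L' (dᵢ + 1)`. -/
def colSpanFrom (A : Matrix (Fin N) (Fin n) R) (d : ℕ) : Submodule R (Fin N → R) :=
  Submodule.span R {c | ∃ k : Fin n, d ≤ (k : ℕ) ∧ c = fun j => A j k}

lemma mulVec_eq_sum_smul_col (A : Matrix (Fin N) (Fin n) R) (z : Fin n → R) :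
    A *ᵥ z = ∑ k, z k • fun j => A j k := by
  ext j
  simp [mulVec, dotProduct, mul_comm]

lemma mem_colSpanFrom_iff {A : Matrix (Fin N) (Fin n) R} {d : ℕ} {x : Fin N → R} :
    x ∈ colSpanFrom A d ↔ ∃ z : Fin n → R, (∀ j : Fin n, (j : ℕ) < d → z j = 0) ∧ A *ᵥ z = x := by
  have hset : {c | ∃ k : Fin n, d ≤ (k : ℕ) ∧ c = fun j => A j k} =
      (fun k j => A j k) '' ↑(univ.filter fun k : Fin n => d ≤ (k : ℕ)) := by
    ext c
    simp [eq_comm]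
  rw [colSpanFrom, hset, Submodule.mem_span_image_finset_iff_exists_fun']
  constructor
  · rintro ⟨c, rfl⟩
    refine ⟨fun k => if d ≤ (k : ℕ) then c k else 0, fun j hj => if_neg (not_le.2 hj), ?_⟩
    simp [mulVec_eq_sum_smul_col, ite_smul, sum_filter]
  · rintro ⟨z, hz, rfl⟩
    refine ⟨z, ?_⟩
    rw [mulVec_eq_sum_smul_col, sum_filter_of_ne]
    intro k _ hk
    by_contra hdk
    exact hk (by simp [hz k (not_le.1 hdk)])

lemma mulVec_mem_colSpanFrom (A : Matrix (Fin N) (Fin n) R) {d : ℕ} {z : Fin n → R}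
    (hz : ∀ j : Fin n, (j : ℕ) < d → z j = 0) : A *ᵥ z ∈ colSpanFrom A d :=
  mem_colSpanFrom_iff.2 ⟨z, hz, rfl⟩

end ColSpan

section Hamming

variable {ι β : Type*} [Fintype ι] [DecidableEq β]

lemma hammingNorm_sub_le [AddGroup β] (x y : ι → β) :
    hammingNorm (x - y) ≤ hammingNorm x + hammingNorm y := by
  have hdist : hammingNorm (x - y) = hammingDist x y := by
    simp [hammingNorm, hammingDist, sub_ne_zero]
  simpa [hdist] using hammingDist_triangle x 0 y

lemma hammingNorm_col_le {κ : Type*} [Fintype κ] [Zero β] (M : ι → κ → β) (k : κ) :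
    hammingNorm (fun i => M i k) ≤ hammingNorm M :=
  hammingNorm_comp_le_hammingNorm (fun _ (v : κ → β) => v k) fun _ => rfl

end Hamming

section Decoding

variable {R : Type*} {N n : ℕ}

lemma mem_colSpanFrom_succ_of_hammingNorm_le [CommSemiring R] [DecidableEq R]
    {A : Matrix (Fin N) (Fin n) R} {d b : ℕ} (hd : d < n)
    (hA : ∀ z : Fin n → R, (∀ j : Fin n, (j : ℕ) < d → z j = 0) →
      z ⟨d, hd⟩ ≠ 0 → b < hammingNorm (A *ᵥ z))
    {x : Fin N → R} (hx : x ∈ colSpanFrom A d) (hxb : hammingNorm x ≤ b) :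
    x ∈ colSpanFrom A (d + 1) := by
  obtain ⟨z, hz, rfl⟩ := mem_colSpanFrom_iff.1 hx
  have hzd : z ⟨d, hd⟩ = 0 := by
    by_contra hzd
    exact (hA z hz hzd).not_ge hxb
  refine mulVec_mem_colSpanFrom A fun j hj => ?_
  rcases Nat.lt_succ_iff_lt_or_eq.1 hj with hj | hj
  · exact hz j hj
  · rwa [show j = ⟨d, hd⟩ from Fin.ext hj]

lemma dotProduct_mulVec_eq_mul_of_forall_lt_eq_zero [CommRing R]
    {A : Matrix (Fin N) (Fin n) R} {d : ℕ} (hd : d < n) {h : Fin N → R}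
    (hh : ∀ x ∈ colSpanFrom A (d + 1), h ⬝ᵥ x = 0)
    {z : Fin n → R} (hz : ∀ j : Fin n, (j : ℕ) < d → z j = 0) :
    h ⬝ᵥ (A *ᵥ z) = z ⟨d, hd⟩ * h ⬝ᵥ fun j => A j ⟨d, hd⟩ := by
  classical
  set e : Fin n := ⟨d, hd⟩
  have htail : h ⬝ᵥ (A *ᵥ (z - Pi.single e (z e))) = 0 := by
    refine hh _ (mulVec_mem_colSpanFrom A fun j hj => ?_)
    rcases Nat.lt_succ_iff_lt_or_eq.1 hj with hj | hj
    · have hje : j ≠ e := fun hje => (hje ▸ hj).ne rfl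
      simp [hz j hj, hje]
    · simp [show j = e from Fin.ext hj]
  calc h ⬝ᵥ (A *ᵥ z)
      = h ⬝ᵥ (A *ᵥ (z - Pi.single e (z e))) + h ⬝ᵥ (A *ᵥ Pi.single e (z e)) := by
        rw [← dotProduct_add, ← mulVec_add, sub_add_cancel]
    _ = z e * h ⬝ᵥ fun j => A j e := by
        rw [htail, zero_add, mulVec_single, op_smul_eq_smul, dotProduct_smul, smul_eq_mul]
        rfl

end Decoding

theorem syndrome_decoding_correct_general
    (F : Type*) [Field F] [DecidableEq F]
    (n t N d_i δ r' : ℕ) (hdn : d_i < n)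
    (L' : Matrix (Fin N) (Fin n) F)
    (hwt : ∀ z : Fin n → F, (∀ j : Fin n, (j : ℕ) < d_i → z j = 0) →
        z ⟨d_i, hdn⟩ ≠ 0 → 2 * δ + 1 ≤ hammingNorm (L' *ᵥ z))
    (h : Fin N → F) (Hi : Matrix (Fin r') (Fin N) F)
    (hHi : ∀ x : Fin N → F, Hi *ᵥ x = 0 ↔
        x ∈ Submodule.span F
          {c : Fin N → F | ∃ k : Fin n, d_i ≤ (k : ℕ) ∧ c = fun j => L' j k})
    (hH : ∀ x : Fin N → F, (h ⬝ᵥ x = 0 ∧ Hi *ᵥ x = 0) ↔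
        x ∈ Submodule.span F
          {c : Fin N → F | ∃ k : Fin n, d_i + 1 ≤ (k : ℕ) ∧ c = fun j => L' j k})
    (s : F) (hs : h ⬝ᵥ (fun j => L' j ⟨d_i, hdn⟩) = s) (hs0 : s ≠ 0)
    (X' : Matrix (Fin n) (Fin t) F)
    (W : Matrix (Fin N) (Fin t) F)
    (hW : (@Finset.filter _ (fun j => W j ≠ 0) (fun _ => inferInstance) Finset.univ).card ≤ δ)
    (ε : Matrix (Fin N) (Fin t) F)
    (hε : (@Finset.filter _ (fun j => ε j ≠ 0) (fun _ => inferInstance) Finset.univ).card ≤ δ)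
    (hsyn : Hi * ε = Hi * W) :
    ∀ k : Fin t,
      s⁻¹ * ((h ⬝ᵥ fun j =>
          (L' * X' + W
            - L' * Matrix.of fun (j' : Fin n) (k' : Fin t) => if (j' : ℕ) < d_i then X' j' k' else 0) j k)
        - (h ⬝ᵥ fun j => ε j k))
      = X' ⟨d_i, hdn⟩ k := by
  intro k
  set w : Fin N → F := fun j => W j k
  set e : Fin N → F := fun j => ε j k
  set z : Fin n → F := fun m => X' m k - if (m : ℕ) < d_i then X' m k else 0
  have hh : ∀ x ∈ colSpanFrom L' (d_i + 1), h ⬝ᵥ x = 0 := fun x hx => ((hH x).2 hx).1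
  have hsyn_k : Hi *ᵥ (w - e) = 0 := by
    rw [mulVec_sub, sub_eq_zero]
    exact funext fun i => congrFun (congrFun hsyn.symm i) k
  have hwe_wt : hammingNorm (w - e) ≤ 2 * δ :=
    calc hammingNorm (w - e) ≤ hammingNorm w + hammingNorm e := hammingNorm_sub_le w e
      _ ≤ hammingNorm W + hammingNorm ε :=
        add_le_add (hammingNorm_col_le W k) (hammingNorm_col_le ε k)
      _ ≤ 2 * δ := by rw [two_mul]; exact add_le_add hW hε
  have herr : h ⬝ᵥ (w - e) = 0 :=
    hh _ (mem_colSpanFrom_succ_of_hammingNorm_le hdn hwt ((hHi _).1 hsyn_k) hwe_wt)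
  have hreceived : (fun j => (L' * X' + W - L' * Matrix.of fun (j' : Fin n) (k' : Fin t) =>
      if (j' : ℕ) < d_i then X' j' k' else 0) j k) = L' *ᵥ z + w := by
    rw [add_sub_right_comm, ← Matrix.mul_sub]
    rfl
  have hdata : h ⬝ᵥ (L' *ᵥ z) = X' ⟨d_i, hdn⟩ k * s := by
    rw [dotProduct_mulVec_eq_mul_of_forall_lt_eq_zero hdn hh (fun j hj => by simp [z, hj]), hs]
    simp [z]
  rw [hreceived, dotProduct_add, hdata, add_sub_assoc, ← dotProduct_sub, herr, add_zero,
    mul_comm, mul_assoc, mul_inv_cancel₀ hs0, mul_one]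

/-- syndrome decoding correctness: suppose every `z` vanishing on
the first `d_i` coordinates with `z_{d_i+1} ≠ 0` has `wt(L' z) ≥ 2δ+1`. Let `C⁽ⁱ⁾`
be the span of columns `d_i+1,…,n` of `L'` and `C₍ᵢ₎` the span of columns
`d_i+2,…,n`; let `h` together with the parity-check matrix `H⁽ⁱ⁾` of `C⁽ⁱ⁾` form a
parity-check matrix of `C₍ᵢ₎`, with `h · L'^{d_i+1} = s ≠ 0`. Then for any data
`X'`, error `W` of row weight `≤ δ`, and any `ε` of row weight `≤ δ` with
`H⁽ⁱ⁾ ε = H⁽ⁱ⁾ W`, the decoder output `(α − hε)/s` equals the request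
`X'_{d_i+1}`, where `α = h · (L'X' + W − ∑_{j ≤ d_i} L'^j X'_j)`. -/
theorem syndrome_decoding_correct
    (F : Type*) [Field F] [Fintype F] [DecidableEq F]
    (n t N d_i δ r' : ℕ) (hdn : d_i < n)
    (L' : Matrix (Fin N) (Fin n) F)
    (hwt : ∀ z : Fin n → F, (∀ j : Fin n, (j : ℕ) < d_i → z j = 0) →
        z ⟨d_i, hdn⟩ ≠ 0 → 2 * δ + 1 ≤ hammingNorm (L' *ᵥ z))
    (h : Fin N → F) (Hi : Matrix (Fin r') (Fin N) F)
    (hHi : ∀ x : Fin N → F, Hi *ᵥ x = 0 ↔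
        x ∈ Submodule.span F
          {c : Fin N → F | ∃ k : Fin n, d_i ≤ (k : ℕ) ∧ c = fun j => L' j k})
    (hH : ∀ x : Fin N → F, (h ⬝ᵥ x = 0 ∧ Hi *ᵥ x = 0) ↔
        x ∈ Submodule.span F
          {c : Fin N → F | ∃ k : Fin n, d_i + 1 ≤ (k : ℕ) ∧ c = fun j => L' j k})
    (s : F) (hs : h ⬝ᵥ (fun j => L' j ⟨d_i, hdn⟩) = s) (hs0 : s ≠ 0)
    (X' : Matrix (Fin n) (Fin t) F)
    (W : Matrix (Fin N) (Fin t) F)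
    (hW : (@Finset.filter _ (fun j => W j ≠ 0) (fun _ => inferInstance) Finset.univ).card ≤ δ)
    (ε : Matrix (Fin N) (Fin t) F)
    (hε : (@Finset.filter _ (fun j => ε j ≠ 0) (fun _ => inferInstance) Finset.univ).card ≤ δ)
    (hsyn : Hi * ε = Hi * W) :
    ∀ k : Fin t,
      s⁻¹ * ((h ⬝ᵥ fun j =>
          (L' * X' + W
            - L' * Matrix.of fun (j' : Fin n) (k' : Fin t) => if (j' : ℕ) < d_i then X' j' k' else 0) j k)
        - (h ⬝ᵥ fun j => ε j k))
      = X' ⟨d_i, hdn⟩ k :=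
  syndrome_decoding_correct_general F n t N d_i δ r' hdn L' hwt h Hi hHi hH s hs hs0 X' W hW ε hε
    hsyn
end
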